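/- arXiv:2203.10775 — 2 statements merged into one kernel-verified Lean document; each statement's English description precedes it below -/
import Mathlib

section
/- Let X₁, X₂, … be i.i.d. random variables with the SVG distribution with parameters a, b > 0 and location m = 0. Define V̂′_N = (1/N)∑_{i=1}^N X_i² and K̂′_N = (1/N)∑_{i=1}^N X_i⁴. Then there exists a constant C > 0 (depending on a and b) such that for all N ≥ 1, P(K̂′_N > 3 (V̂′_N)²) ≥ 1 − C/N. -/
open MeasureTheory ProbabilityTheory Filter
open scoped Topology

/-- The symmetric variance-gamma (SVG) distribution with shape `a`, scale `b` and
location `m`: the law of `m + √(b·G)·Z` where `G ~ Gamma(a,1)` and `Z ~ N(0,1)`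
are independent. -/
noncomputable def svg (a b m : ℝ) : Measure ℝ :=
  ((gammaMeasure a 1).prod (gaussianReal 0 1)).map
    (fun p : ℝ × ℝ => m + Real.sqrt (b * p.1) * p.2)

/-- Empirical raw moment of order `k` (no centering). -/
noncomputable def empRawMom {Ω : Type*} (X : ℕ → Ω → ℝ) (k N : ℕ) (ω : Ω) : ℝ :=
  (∑ i ∈ Finset.range N, (X i ω) ^ k) / N

/-!
The sample moments `V̂′_N` and `K̂′_N` are averages of the i.i.d. square-integrable variables
`X_i²` and `X_i⁴`, so by Chebyshev's inequality each one lies within `ε` of its mean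
`ab`, resp. `3a(a+1)b²`, outside an event of probability `O(1/N)`. Since
`3(ab)² < 3a(a+1)b²` and `(V, K) ↦ K - 3V²` is continuous, the strict inequality
`3V² < K` persists on an `ε`-neighbourhood of the point of means.
The moments come from the product structure of the SVG law:
`E[X^{2k}] = b^k E[G^k] E[Z^{2k}] = b^k Γ(a+k)/Γ(a) · (2k-1)!!`.
-/

open Real Set
open scoped Nat

lemma ae_nonneg_gammaMeasure (a r : ℝ) : ∀ᵐ x ∂gammaMeasure a r, 0 ≤ x := by
  refine ae_iff.mpr ?_
  simp only [not_le]
  change gammaMeasure a r (Iio 0) = 0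
  rw [gammaMeasure, withDensity_apply _ measurableSet_Iio,
    setLIntegral_congr_fun measurableSet_Iio (fun x (hx : x < 0) => gammaPDF_of_neg hx),
    lintegral_zero]

lemma integral_pow_gammaMeasure {a r : ℝ} (ha : 0 < a) (hr : 0 < r) (k : ℕ) :
    ∫ x, x ^ k ∂gammaMeasure a r = Gamma (a + k) / (Gamma a * r ^ k) := by
  have hpdf : ∀ x ∈ Ioi (0 : ℝ), (gammaPDF a r x).toReal • x ^ k =
      r ^ a / Gamma a * (x ^ (a + k - 1) * exp (-(r * x))) := fun x (hx : 0 < x) => by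
    rw [gammaPDF_of_nonneg hx.le, ENNReal.toReal_ofReal (by positivity), smul_eq_mul,
      add_sub_right_comm, rpow_add hx, rpow_natCast]
    ring
  rw [gammaMeasure, integral_withDensity_eq_integral_toReal_smul (f := gammaPDF a r)
      (measurable_gammaPDFReal a r).ennreal_ofReal (ae_of_all _ fun _ => ENNReal.ofReal_lt_top),
    ← setIntegral_eq_integral_of_forall_compl_eq_zero (s := Ici 0)
      (fun x hx => by simp [gammaPDF_of_neg (not_le.mp hx)]),
    integral_Ici_eq_integral_Ioi, setIntegral_congr_fun measurableSet_Ioi hpdf,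
    integral_const_mul, integral_rpow_mul_exp_neg_mul_Ioi (by positivity) hr,
    one_div, inv_rpow hr.le, rpow_add hr, rpow_natCast]
  have := (Gamma_pos_of_pos ha).ne'
  field_simp

lemma integral_pow_two_mul_gaussianReal (k : ℕ) :
    ∫ x, x ^ (2 * k) ∂gaussianReal 0 1 = (2 * k - 1 : ℕ)‼ := by
  set f : ℝ → ℝ := fun t => (√(2 * π))⁻¹ * (t ^ (2 * k : ℝ) * exp (-(1 / 2) * t ^ (2 : ℝ)))
  have heven : ∀ x : ℝ, gaussianPDFReal 0 1 x • x ^ (2 * k) = f |x| := by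
    intro x
    simp only [f, show (2 * k : ℝ) = ((2 * k : ℕ) : ℝ) by push_cast; ring]
    simp only [gaussianPDFReal, rpow_two, rpow_natCast, pow_mul, sq_abs, smul_eq_mul,
      NNReal.coe_one]
    ring_nf
  have hhalf : (1 / 2 : ℝ) ^ (-((2 * k : ℝ) + 1) / 2) = 2 ^ k * √2 := by
    rw [one_div, inv_rpow zero_le_two, ← rpow_neg zero_le_two, sqrt_eq_rpow,
      ← rpow_natCast, ← rpow_add zero_lt_two]
    ring_nf
  rw [integral_gaussianReal_eq_integral_smul one_ne_zero, integral_congr_ae (ae_of_all _ heven),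
    integral_comp_abs, integral_const_mul,
    integral_rpow_mul_exp_neg_mul_rpow zero_lt_two (by linarith [k.cast_nonneg (α := ℝ)])
      one_half_pos, hhalf, show ((2 * k : ℝ) + 1) / 2 = k + 1 / 2 by ring, Gamma_nat_add_half,
    sqrt_mul zero_le_two]
  field_simp

section SVG

variable {a b : ℝ}

lemma integral_pow_two_mul_svg (ha : 0 < a) (hb : 0 ≤ b) (k : ℕ) :
    ∫ x, x ^ (2 * k) ∂svg a b 0 = b ^ k * (Gamma (a + k) / Gamma a) * (2 * k - 1 : ℕ)‼ := by
  have hsq : (fun p : ℝ × ℝ => (0 + √(b * p.1) * p.2) ^ (2 * k)) =ᵐ[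
      (gammaMeasure a 1).prod (gaussianReal 0 1)] fun p => (b ^ k * p.1 ^ k) * p.2 ^ (2 * k) := by
    filter_upwards [Measure.quasiMeasurePreserving_fst.ae (ae_nonneg_gammaMeasure a 1)]
      with p hp
    rw [zero_add, mul_pow, pow_mul, sq_sqrt (mul_nonneg hb hp), mul_pow, pow_mul]
  have := isProbabilityMeasure_gammaMeasure ha one_pos
  rw [svg, integral_map (by fun_prop) (by fun_prop), integral_congr_ae hsq,
    integral_prod_mul (fun x => b ^ k * x ^ k) (fun y => y ^ (2 * k)), integral_const_mul,
    integral_pow_gammaMeasure ha one_pos, integral_pow_two_mul_gaussianReal, one_pow, mul_one]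

lemma memLp_pow_svg (ha : 0 < a) (hb : 0 < b) (k : ℕ) :
    MemLp (fun x => x ^ k) 2 (svg a b 0) := by
  refine (memLp_two_iff_integrable_sq (by fun_prop)).mpr (.of_integral_ne_zero ?_)
  simp_rw [← pow_mul, mul_comm k 2, integral_pow_two_mul_svg ha hb.le]
  have := Gamma_pos_of_pos ha
  have := Gamma_pos_of_pos (show 0 < a + k by positivity)
  positivity

lemma integral_sq_svg (ha : 0 < a) (hb : 0 ≤ b) : ∫ x, x ^ 2 ∂svg a b 0 = a * b := by
  have hΓ := (Gamma_pos_of_pos ha).ne'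
  rw [mul_comm]
  simpa [Gamma_add_one ha.ne', field] using integral_pow_two_mul_svg ha hb 1

lemma integral_pow_four_svg (ha : 0 < a) (hb : 0 ≤ b) :
    ∫ x, x ^ 4 ∂svg a b 0 = 3 * a * (a + 1) * b ^ 2 := by
  have hΓ := (Gamma_pos_of_pos ha).ne'
  have h := integral_pow_two_mul_svg ha hb 2
  rw [show (a + (2 : ℕ)) = a + 1 + 1 by push_cast; ring, Gamma_add_one (by positivity),
    Gamma_add_one ha.ne'] at h
  rw [h]
  norm_num [Nat.doubleFactorial]
  field_simp

end SVG

noncomputable def empMean {Ω α : Type*} (X : ℕ → Ω → α) (f : α → ℝ) (N : ℕ) (ω : Ω) : ℝ :=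
  (∑ i ∈ Finset.range N, f (X i ω)) / N

section EmpiricalMean

variable {Ω α : Type*} [MeasurableSpace Ω] [MeasurableSpace α] {P : Measure Ω} {ν : Measure α}
  {X : ℕ → Ω → α}

lemma measureReal_abs_empMean_sub_integral_ge_le [IsFiniteMeasure P]
    (hX : ∀ i, Measurable (X i)) (hindep : Pairwise fun i j => IndepFun (X i) (X j) P)
    (hdist : ∀ i, P.map (X i) = ν) {f : α → ℝ} (hf : Measurable f) (hf2 : MemLp f 2 ν)
    {ε : ℝ} (hε : 0 < ε) {N : ℕ} (hN : N ≠ 0) :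
    P.real {ω | ε ≤ |empMean X f N ω - ∫ x, f x ∂ν|} ≤ Var[f; ν] / (ε ^ 2 * N) := by
  have hNpos : (0 : ℝ) < N := by positivity
  have hmp : ∀ i, MeasurePreserving (X i) P ν := fun i => ⟨hX i, hdist i⟩
  have hL2 : ∀ i, MemLp (fun ω => f (X i ω)) 2 P := fun i => hf2.comp_measurePreserving (hmp i)
  set S : Ω → ℝ := ∑ i ∈ Finset.range N, fun ω => f (X i ω) with hS
  have hSL2 : MemLp S 2 P := memLp_finsetSum' _ fun i _ => hL2 i
  have hmean : P[S] = N * ∫ x, f x ∂ν := by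
    have hXf : ∀ i, ∫ ω, f (X i ω) ∂P = ∫ x, f x ∂ν := fun i => by
      rw [← hdist i, integral_map (hX i).aemeasurable hf.aestronglyMeasurable]
    simp only [hS, Finset.sum_apply]
    rw [integral_finsetSum _ fun i _ => (hL2 i).integrable one_le_two]
    simp [hXf]
  have hvar : Var[S; P] = N * Var[f; ν] := by
    rw [hS, IndepFun.variance_sum (fun i _ => hL2 i)
      (fun i _ j _ hij => (hindep hij).comp hf hf)]
    simp [fun i => (hmp i).variance_fun_comp hf.aemeasurable]
  have hsub : {ω | ε ≤ |empMean X f N ω - ∫ x, f x ∂ν|} ⊆ {ω | N * ε ≤ |S ω - P[S]|} := by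
    intro ω hω
    have hSω : S ω - P[S] = N * (empMean X f N ω - ∫ x, f x ∂ν) := by
      rw [hmean, hS, Finset.sum_apply, empMean]
      field_simp
    simpa [hSω, abs_mul, abs_of_pos hNpos, hNpos] using hω
  calc _ ≤ P.real {ω | N * ε ≤ |S ω - P[S]|} := measureReal_mono hsub
    _ ≤ Var[S; P] / (N * ε) ^ 2 :=
        ENNReal.toReal_le_of_le_ofReal (div_nonneg (variance_nonneg _ _) (sq_nonneg _))
          (meas_ge_le_variance_div_sq hSL2 (mul_pos hNpos hε))
    _ = Var[f; ν] / (ε ^ 2 * N) := by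
        rw [hvar]
        field_simp

lemma one_sub_add_le_measureReal_of_compl_inter_compl_subset [IsProbabilityMeasure P]
    {E A B : Set Ω} (h : Aᶜ ∩ Bᶜ ⊆ E) : 1 - (P.real A + P.real B) ≤ P.real E := by
  have hcover : univ ⊆ E ∪ (A ∪ B) := fun ω _ => by
    by_contra hω
    simp only [mem_union, not_or] at hω
    exact hω.1 (h ⟨hω.2.1, hω.2.2⟩)
  have := (measureReal_mono (μ := P) hcover).trans
    ((measureReal_union_le _ _).trans (add_le_add_right (measureReal_union_le _ _) _))
  rw [probReal_univ] at this
  linarith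

lemma exists_pos_one_sub_div_le_measureReal_empMean_mem [IsProbabilityMeasure P]
    (hX : ∀ i, Measurable (X i)) (hindep : Pairwise fun i j => IndepFun (X i) (X j) P)
    (hdist : ∀ i, P.map (X i) = ν) {f g : α → ℝ} (hf : Measurable f) (hg : Measurable g)
    (hf2 : MemLp f 2 ν) (hg2 : MemLp g 2 ν) {U : Set (ℝ × ℝ)} (hU : IsOpen U)
    (hmem : (∫ x, f x ∂ν, ∫ x, g x ∂ν) ∈ U) :
    ∃ C > 0, ∀ N : ℕ, 1 ≤ N →
      1 - C / N ≤ P.real {ω | (empMean X f N ω, empMean X g N ω) ∈ U} := by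
  obtain ⟨ε, hε, hball⟩ := Metric.isOpen_iff.mp hU _ hmem
  have hv : 0 ≤ Var[f; ν] + Var[g; ν] := add_nonneg (variance_nonneg _ _) (variance_nonneg _ _)
  refine ⟨(Var[f; ν] + Var[g; ν]) / ε ^ 2 + 1, by positivity, fun N hN => ?_⟩
  have hN0 : N ≠ 0 := Nat.one_le_iff_ne_zero.mp hN
  have hnear : {ω | ε ≤ |empMean X f N ω - ∫ x, f x ∂ν|}ᶜ ∩
      {ω | ε ≤ |empMean X g N ω - ∫ x, g x ∂ν|}ᶜ ⊆
      {ω | (empMean X f N ω, empMean X g N ω) ∈ U} := fun ω ⟨hωf, hωg⟩ => hball <| by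
    simp only [mem_compl_iff, mem_ofPred_eq, not_le] at hωf hωg
    rw [Metric.mem_ball, Prod.dist_eq, max_lt_iff]
    exact ⟨hωf, hωg⟩
  have hC : Var[f; ν] / (ε ^ 2 * N) + Var[g; ν] / (ε ^ 2 * N) ≤
      ((Var[f; ν] + Var[g; ν]) / ε ^ 2 + 1) / N := by
    rw [← add_div, ← div_div]
    gcongr
    linarith
  linarith [one_sub_add_le_measureReal_of_compl_inter_compl_subset (P := P) hnear,
    measureReal_abs_empMean_sub_integral_ge_le hX hindep hdist hf hf2 hε hN0,
    measureReal_abs_empMean_sub_integral_ge_le hX hindep hdist hg hg2 hε hN0]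

end EmpiricalMean

/-- Feasibility of the classic MME for the SVG distribution with `m = 0`:
`P(K̂′_N > 3 (V̂′_N)²) ≥ 1 − C/N`. -/
theorem svg_mme_feasible
    {Ω : Type*} [MeasurableSpace Ω] (P : Measure Ω) [IsProbabilityMeasure P]
    (a b : ℝ) (ha : 0 < a) (hb : 0 < b)
    (X : ℕ → Ω → ℝ) (hXmeas : ∀ i, Measurable (X i))
    (hindep : iIndepFun X P)
    (hdist : ∀ i, Measure.map (X i) P = svg a b 0) :
    ∃ C : ℝ, 0 < C ∧ ∀ N : ℕ, 1 ≤ N →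
      1 - C / N ≤
        (P {ω | 3 * (empRawMom X 2 N ω) ^ 2 < empRawMom X 4 N ω}).toReal := by
  have hmeans : (∫ x, x ^ 2 ∂svg a b 0, ∫ x, x ^ 4 ∂svg a b 0) ∈
      {p : ℝ × ℝ | 3 * p.1 ^ 2 < p.2} := by
    rw [mem_ofPred_eq, integral_sq_svg ha hb.le, integral_pow_four_svg ha hb.le]
    nlinarith [mul_pos ha (pow_pos hb 2)]
  -- `empRawMom X k N` is definitionally `empMean X (· ^ k) N`.
  exact exists_pos_one_sub_div_le_measureReal_empMean_mem hXmeas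
    (fun i j hij => hindep.indepFun hij) hdist (by fun_prop) (by fun_prop)
    (memLp_pow_svg ha hb 2) (memLp_pow_svg ha hb 4) (isOpen_lt (by fun_prop) continuous_snd)
    hmeans
end

section
/- Define L(x) := (1/2)·ln(π/2) + (1/2)·ln x + ln Γ(x) − ln Γ(x + 1/2) for x > 0. Then L is a smooth, strictly decreasing bijection from (0, ∞) onto ((1/2)·ln(π/2), ∞), and L′(x) < 0 for all x > 0. -/
open Real Set Filter Topology

/-- The function `L(x) = ½ln(π/2) + ½ln x + ln Γ(x) − ln Γ(x + ½)`. -/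
noncomputable def Lfun (x : ℝ) : ℝ :=
  (1 / 2) * Real.log (π / 2) + (1 / 2) * Real.log x
    + Real.log (Real.Gamma x) - Real.log (Real.Gamma (x + 1 / 2))

private lemma contDiffAt_realGamma {x : ℝ} (hx : 0 < x) : ContDiffAt ℝ (⊤ : ℕ∞) Real.Gamma x := by
  have hU : IsOpen {s : ℂ | 0 < s.re} := isOpen_lt continuous_const Complex.continuous_re
  have hA : AnalyticOnNhd ℂ Complex.Gamma {s : ℂ | 0 < s.re} := by
    refine DifferentiableOn.analyticOnNhd (fun s hs => ?_) hU
    refine (Complex.differentiableAt_Gamma s fun m => ?_).differentiableWithinAt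
    intro h
    rw [h] at hs
    simp only [mem_setOf_eq, Complex.neg_re, Complex.natCast_re] at hs
    have : (0:ℝ) ≤ (m:ℝ) := m.cast_nonneg
    linarith
  have hx' : (x : ℂ) ∈ {s : ℂ | 0 < s.re} := by simpa using hx
  have h1 : ContDiffAt ℝ (⊤ : ℕ∞) (fun y : ℝ => Complex.Gamma y) x :=
    ((hA _ hx').contDiffAt.restrict_scalars ℝ).comp x Complex.ofRealCLM.contDiff.contDiffAt
  have h2 : ContDiffAt ℝ (⊤ : ℕ∞) (fun y : ℝ => (Complex.Gamma y).re) x :=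
    Complex.reCLM.contDiff.contDiffAt.comp x h1
  refine h2.congr_of_eventuallyEq (Eventually.of_forall fun y => ?_)
  show Real.Gamma y = (Complex.Gamma y).re
  rw [Complex.Gamma_ofReal, Complex.ofReal_re]

private noncomputable def phiL (x : ℝ) : ℝ :=
  Real.log (x + 1/2) - (1/2) * Real.log x - (1/2) * Real.log (x + 1)

private lemma phiL_eq {x : ℝ} (hx : 0 < x) :
    phiL x = (1/2) * Real.log (1 + 1/(4*x*(x+1))) := by
  have hx1 : (0:ℝ) < x + 1 := by linarith
  have key : 1 + 1/(4*x*(x+1)) = (x + 1/2)^2 / (x*(x+1)) := by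
    field_simp
    ring
  rw [phiL, key, Real.log_div (by positivity) (by positivity), Real.log_pow,
    Real.log_mul hx.ne' hx1.ne']
  push_cast
  ring

private lemma phiL_pos {x : ℝ} (hx : 0 < x) : 0 < phiL x := by
  rw [phiL_eq hx]
  have h1 : (1:ℝ) < 1 + 1/(4*x*(x+1)) := by
    have : (0:ℝ) < 1/(4*x*(x+1)) := by positivity
    linarith
  have := Real.log_pos h1
  linarith

private lemma phiL_anti {x y : ℝ} (hx : 0 < x) (hxy : x < y) : phiL y < phiL x := by
  have hy : 0 < y := hx.trans hxy
  rw [phiL_eq hx, phiL_eq hy]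
  have h4 : 4*x*(x+1) < 4*y*(y+1) := by nlinarith
  have h5 : 1/(4*y*(y+1)) < 1/(4*x*(x+1)) := by
    apply one_div_lt_one_div_of_lt (by positivity) h4
  have h6 : Real.log (1 + 1/(4*y*(y+1))) < Real.log (1 + 1/(4*x*(x+1))) := by
    apply Real.log_lt_log (by positivity)
    linarith
  linarith

private lemma phiL_anti_le {x y : ℝ} (hx : 0 < x) (hxy : x ≤ y) : phiL y ≤ phiL x := by
  rcases eq_or_lt_of_le hxy with rfl | h
  · exact le_rfl
  · exact (phiL_anti hx h).le

private lemma Lfun_rec {x : ℝ} (hx : 0 < x) : Lfun x = phiL x + Lfun (x + 1) := by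
  have hxh : (0:ℝ) < x + 1/2 := by linarith
  have h1 : Real.Gamma (x + 1) = x * Real.Gamma x := Real.Gamma_add_one hx.ne'
  have h2 : Real.Gamma (x + 1 + 1/2) = (x + 1/2) * Real.Gamma (x + 1/2) := by
    rw [show x + 1 + 1/2 = (x + 1/2) + 1 by ring, Real.Gamma_add_one hxh.ne']
  unfold Lfun phiL
  rw [h1, h2, Real.log_mul hx.ne' (Real.Gamma_pos_of_pos hx).ne',
    Real.log_mul hxh.ne' (Real.Gamma_pos_of_pos hxh).ne']
  ring

private lemma Lfun_lower {x : ℝ} (hx : 0 < x) : (1/2) * Real.log (π/2) ≤ Lfun x := by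
  have hx1 : x + 1 ∈ Ioi (0:ℝ) := by simp; linarith
  have hc := Real.convexOn_log_Gamma.2 (mem_Ioi.mpr hx) hx1
    (by norm_num : (0:ℝ) ≤ 1/2) (by norm_num : (0:ℝ) ≤ 1/2) (by norm_num)
  simp only [smul_eq_mul, Function.comp_apply] at hc
  rw [show (1/2:ℝ)*x + (1/2)*(x+1) = x + 1/2 by ring] at hc
  rw [Real.Gamma_add_one hx.ne', Real.log_mul hx.ne' (Real.Gamma_pos_of_pos hx).ne'] at hc
  unfold Lfun
  linarith

private lemma Lfun_upper {x : ℝ} (hx : 1/2 < x) :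
    Lfun x ≤ (1/2) * Real.log (π/2) + (1/2) * (Real.log x - Real.log (x - 1/2)) := by
  have h0 : (0:ℝ) < x - 1/2 := by linarith
  have hxp : (0:ℝ) < x := by linarith
  have hm : x - 1/2 ∈ Ioi (0:ℝ) := mem_Ioi.mpr h0
  have hp : x + 1/2 ∈ Ioi (0:ℝ) := by simp; linarith
  have hc := Real.convexOn_log_Gamma.2 hm hp
    (by norm_num : (0:ℝ) ≤ 1/2) (by norm_num : (0:ℝ) ≤ 1/2) (by norm_num)
  simp only [smul_eq_mul, Function.comp_apply] at hc
  rw [show (1/2:ℝ)*(x-1/2) + (1/2)*(x+1/2) = x by ring] at hc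
  have hrec : Real.Gamma (x + 1/2) = (x - 1/2) * Real.Gamma (x - 1/2) := by
    rw [show x + 1/2 = (x - 1/2) + 1 by ring, Real.Gamma_add_one h0.ne']
  rw [hrec, Real.log_mul h0.ne' (Real.Gamma_pos_of_pos h0).ne'] at hc
  unfold Lfun
  rw [hrec, Real.log_mul h0.ne' (Real.Gamma_pos_of_pos h0).ne']
  linarith

private lemma Lfun_tendsto_atTop :
    Tendsto Lfun atTop (𝓝 ((1/2) * Real.log (π/2))) := by
  have hlog : Tendsto (fun x : ℝ => Real.log x - Real.log (x - 1/2)) atTop (𝓝 0) := by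
    have h1 : Tendsto (fun x : ℝ => x / (x - 1/2)) atTop (𝓝 1) := by
      have h2 : Tendsto (fun x : ℝ => 1 + (1/2) / (x - 1/2)) atTop (𝓝 (1 + 0)) := by
        refine tendsto_const_nhds.add (Tendsto.div_atTop tendsto_const_nhds ?_)
        have := tendsto_atTop_add_const_right atTop (-(1/2) : ℝ) tendsto_id
        simpa [sub_eq_add_neg] using this
      rw [add_zero] at h2
      refine h2.congr' ?_
      filter_upwards [eventually_gt_atTop (1/2 : ℝ)] with x hx
      have h0 : x - 1/2 ≠ 0 := by intro h; rw [sub_eq_zero] at h; simp [h] at hx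
      have h0' : x * 2 - 1 ≠ 0 := fun h => h0 (by linarith)
      have h0'' : 2 * x - 1 ≠ 0 := fun h => h0 (by linarith)
      field_simp
      ring
    have h3 : Tendsto (fun x : ℝ => Real.log (x / (x - 1/2))) atTop (𝓝 (Real.log 1)) :=
      ((Real.continuousAt_log one_ne_zero).tendsto).comp h1
    rw [Real.log_one] at h3
    refine h3.congr' ?_
    filter_upwards [eventually_gt_atTop (1/2 : ℝ)] with x hx
    have hxp : (0:ℝ) < x := by linarith
    have h0 : (0:ℝ) < x - 1/2 := by linarith
    rw [Real.log_div hxp.ne' h0.ne']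
  have hub : Tendsto (fun x : ℝ => (1/2) * Real.log (π/2)
      + (1/2) * (Real.log x - Real.log (x - 1/2))) atTop
      (𝓝 ((1/2) * Real.log (π/2) + (1/2) * 0)) :=
    tendsto_const_nhds.add (hlog.const_mul _)
  rw [mul_zero, add_zero] at hub
  refine tendsto_of_tendsto_of_tendsto_of_le_of_le' tendsto_const_nhds hub ?_ ?_
  · filter_upwards [eventually_gt_atTop (0:ℝ)] with x hx
    exact Lfun_lower hx
  · filter_upwards [eventually_gt_atTop (1/2:ℝ)] with x hx
    exact Lfun_upper hx

private lemma Lfun_sum {x : ℝ} (hx : 0 < x) (n : ℕ) :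
    Lfun x = (∑ m ∈ Finset.range n, phiL (x + m)) + Lfun (x + n) := by
  induction n with
  | zero => simp
  | succ n ih =>
      have hxn : (0:ℝ) < x + n := by positivity
      rw [Finset.sum_range_succ, ih, Lfun_rec hxn]
      push_cast
      ring_nf

private lemma Lfun_antitoneOn : AntitoneOn Lfun (Ioi (0:ℝ)) := by
  intro x hx y hy hxy
  rw [mem_Ioi] at hx hy
  have key : ∀ n : ℕ, Lfun (x + n) - Lfun (y + n) ≤ Lfun x - Lfun y := by
    intro n
    rw [Lfun_sum hx n, Lfun_sum hy n]
    have hsum : ∀ m ∈ Finset.range n, phiL (y + m) ≤ phiL (x + m) := by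
      intro m _
      exact phiL_anti_le (by positivity) (by linarith)
    have := Finset.sum_le_sum hsum
    linarith
  have hn : ∀ z : ℝ, Tendsto (fun n : ℕ => z + (n:ℝ)) atTop atTop := fun z =>
    tendsto_atTop_add_const_left _ z tendsto_natCast_atTop_atTop
  have hlim : Tendsto (fun n : ℕ => Lfun (x + n) - Lfun (y + n)) atTop (𝓝 0) := by
    have := (Lfun_tendsto_atTop.comp (hn x)).sub (Lfun_tendsto_atTop.comp (hn y))
    simpa using this
  have h0 : (0:ℝ) ≤ Lfun x - Lfun y := le_of_tendsto hlim (Eventually.of_forall key)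
  linarith

private lemma Lfun_strictAntiOn : StrictAntiOn Lfun (Ioi (0:ℝ)) := by
  intro x hx y hy hxy
  rw [mem_Ioi] at hx hy
  have h1 : Lfun x = phiL x + Lfun (x + 1) := Lfun_rec hx
  have h2 : Lfun y = phiL y + Lfun (y + 1) := Lfun_rec hy
  have h3 : phiL y < phiL x := phiL_anti hx hxy
  have h4 : Lfun (y + 1) ≤ Lfun (x + 1) :=
    Lfun_antitoneOn (by simp; linarith) (by simp; linarith) (by linarith)
  linarith

private lemma Lfun_gt {x : ℝ} (hx : 0 < x) : (1/2) * Real.log (π/2) < Lfun x := by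
  rw [Lfun_rec hx]
  have h1 := Lfun_lower (show (0:ℝ) < x + 1 by linarith)
  have h2 := phiL_pos hx
  linarith

private lemma contDiffAt_Lfun {x : ℝ} (hx : 0 < x) : ContDiffAt ℝ (⊤ : ℕ∞) Lfun x := by
  have hxh : (0:ℝ) < x + 1/2 := by linarith
  have hg1 : ContDiffAt ℝ (⊤ : ℕ∞) (fun t : ℝ => Real.log (Real.Gamma t)) x :=
    (contDiffAt_realGamma hx).log (Real.Gamma_pos_of_pos hx).ne'
  have hg2 : ContDiffAt ℝ (⊤ : ℕ∞) (fun t : ℝ => Real.log (Real.Gamma (t + 1/2))) x := by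
    have hcomp : ContDiffAt ℝ (⊤ : ℕ∞) (fun t : ℝ => Real.Gamma (t + 1/2)) x :=
      (contDiffAt_realGamma hxh).comp (f := fun t : ℝ => t + 1/2) x (contDiffAt_id.add contDiffAt_const)
    exact hcomp.log (Real.Gamma_pos_of_pos hxh).ne'
  have hlg : ContDiffAt ℝ (⊤ : ℕ∞) (fun t : ℝ => Real.log t) x := contDiffAt_id.log hx.ne'
  exact ((contDiffAt_const.add (contDiffAt_const.mul hlg)).add hg1).sub hg2

private lemma Lfun_diffAt {x : ℝ} (hx : 0 < x) : DifferentiableAt ℝ Lfun x :=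
  (contDiffAt_Lfun hx).differentiableAt (by simp)

private lemma Lfun_deriv_nonpos {t : ℝ} (ht : 0 < t) : deriv Lfun t ≤ 0 := by
  have hd := (Lfun_diffAt ht).hasDerivAt
  rw [hasDerivAt_iff_tendsto_slope] at hd
  have hsub : Ioi t ⊆ {t}ᶜ := fun y hy => by
    simp only [mem_compl_iff, mem_singleton_iff]
    exact ne_of_gt hy
  have hd' : Tendsto (slope Lfun t) (𝓝[>] t) (𝓝 (deriv Lfun t)) :=
    hd.mono_left (nhdsWithin_mono t hsub)
  refine le_of_tendsto hd' ?_
  filter_upwards [self_mem_nhdsWithin] with y hy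
  have hy' : t < y := hy
  rw [slope_def_field]
  apply div_nonpos_of_nonpos_of_nonneg
  · have := Lfun_antitoneOn (mem_Ioi.mpr ht) (mem_Ioi.mpr (ht.trans hy')) hy'.le
    linarith
  · linarith

private lemma Lfun_deriv_neg {x : ℝ} (hx : 0 < x) : deriv Lfun x < 0 := by
  have hxh : (0:ℝ) < x + 1/2 := by linarith
  have hx1 : (0:ℝ) < x + 1 := by linarith
  have l1 : HasDerivAt (fun t : ℝ => Real.log (t + 1/2)) (1/(x + 1/2)) x := by
    have := ((hasDerivAt_id x).add_const (1/2 : ℝ)).log hxh.ne'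
    simpa using this
  have l2 : HasDerivAt (fun t : ℝ => (1/2) * Real.log t) ((1/2) * x⁻¹) x :=
    (Real.hasDerivAt_log hx.ne').const_mul (1/2)
  have l3 : HasDerivAt (fun t : ℝ => (1/2) * Real.log (t + 1)) ((1/2) * (1/(x+1))) x := by
    have := (((hasDerivAt_id x).add_const (1 : ℝ)).log hx1.ne').const_mul (1/2 : ℝ)
    simpa using this
  have hph : HasDerivAt phiL (1/(x + 1/2) - (1/2) * x⁻¹ - (1/2) * (1/(x+1))) x :=
    (l1.sub l2).sub l3
  have hsh : HasDerivAt (fun t : ℝ => Lfun (t + 1)) (deriv Lfun (x + 1)) x := by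
    have := ((Lfun_diffAt hx1).hasDerivAt).comp x ((hasDerivAt_id x).add_const (1:ℝ))
    simpa [Function.comp_def] using this
  have hsum := hph.add hsh
  have heq : (fun t : ℝ => phiL t + Lfun (t + 1)) =ᶠ[𝓝 x] Lfun := by
    filter_upwards [isOpen_Ioi.mem_nhds (mem_Ioi.mpr hx)] with t ht
    exact (Lfun_rec ht).symm
  have hL : HasDerivAt Lfun (1/(x + 1/2) - (1/2) * x⁻¹ - (1/2) * (1/(x+1))
      + deriv Lfun (x + 1)) x := hsum.congr_of_eventuallyEq heq.symm
  rw [hL.deriv]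
  have hp : 1/(x + 1/2) - (1/2) * x⁻¹ - (1/2) * (1/(x+1))
      = -(1/(2*x*(x+1)*(2*x+1))) := by
    field_simp
    ring
  have h1 := Lfun_deriv_nonpos hx1
  have h2 : (0:ℝ) < 1/(2*x*(x+1)*(2*x+1)) := by positivity
  rw [hp]
  linarith

private lemma Lfun_tendsto_zero : Tendsto Lfun (𝓝[>] (0:ℝ)) atTop := by
  have heq : Lfun =ᶠ[𝓝[>] (0:ℝ)] fun x => (1/2) * (-Real.log x)
      + ((1/2) * Real.log (π/2) + Real.log (Real.Gamma (x + 1))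
        - Real.log (Real.Gamma (x + 1/2))) := by
    filter_upwards [self_mem_nhdsWithin] with x hx
    have hx' : (0:ℝ) < x := hx
    unfold Lfun
    rw [Real.Gamma_add_one hx'.ne',
      Real.log_mul hx'.ne' (Real.Gamma_pos_of_pos hx').ne']
    ring
  refine Tendsto.congr' heq.symm ?_
  have part2 : Tendsto (fun x : ℝ => (1/2) * (-Real.log x)) (𝓝[>] (0:ℝ)) atTop := by
    have h1 : Tendsto (fun x : ℝ => -Real.log x) (𝓝[>] (0:ℝ)) atTop :=
      tendsto_neg_atBot_atTop.comp (Real.tendsto_log_nhdsNE_zero.mono_left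
        (nhdsWithin_mono _ fun y (hy : 0 < y) => hy.ne'))
    exact h1.const_mul_atTop (by norm_num)
  have part1 : Tendsto (fun x : ℝ => (1/2) * Real.log (π/2)
      + Real.log (Real.Gamma (x + 1)) - Real.log (Real.Gamma (x + 1/2)))
      (𝓝[>] (0:ℝ)) (𝓝 ((1/2) * Real.log (π/2) + Real.log (Real.Gamma (0 + 1))
        - Real.log (Real.Gamma (0 + 1/2)))) := by
    have hc : ContinuousAt (fun x : ℝ => (1/2) * Real.log (π/2)
        + Real.log (Real.Gamma (x + 1)) - Real.log (Real.Gamma (x + 1/2))) 0 := by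
      have hG1 : ContinuousAt (fun x : ℝ => Real.Gamma (x + 1)) 0 := by
        apply ContinuousAt.comp (g := Real.Gamma) (f := fun x : ℝ => x + 1)
        · show ContinuousAt Real.Gamma ((0:ℝ) + 1)
          rw [zero_add]
          exact (contDiffAt_realGamma one_pos).continuousAt
        · fun_prop
      have hG2 : ContinuousAt (fun x : ℝ => Real.Gamma (x + 1/2)) 0 := by
        apply ContinuousAt.comp (g := Real.Gamma) (f := fun x : ℝ => x + 1/2)
        · show ContinuousAt Real.Gamma ((0:ℝ) + 1/2)
          rw [zero_add]
          exact (contDiffAt_realGamma one_half_pos).continuousAt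
        · fun_prop
      refine (continuousAt_const.add (hG1.log ?_)).sub (hG2.log ?_)
      · simp only [zero_add]
        exact (Real.Gamma_pos_of_pos one_pos).ne'
      · simp only [zero_add]
        exact (Real.Gamma_pos_of_pos one_half_pos).ne'
    exact hc.tendsto.mono_left nhdsWithin_le_nhds
  exact part2.atTop_add part1

/-- `L` is a smooth, strictly decreasing bijection from `(0, ∞)` onto
`(½ln(π/2), ∞)`, with `L′(x) < 0` for all `x > 0`. -/
theorem Lfun_smooth_strictAnti_bijOn_deriv_neg :
    ContDiffOn ℝ (⊤ : ℕ∞) Lfun (Ioi (0 : ℝ)) ∧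
    StrictAntiOn Lfun (Ioi (0 : ℝ)) ∧
    BijOn Lfun (Ioi (0 : ℝ)) (Ioi ((1 / 2) * Real.log (π / 2))) ∧
    ∀ x : ℝ, 0 < x → deriv Lfun x < 0 := by
  have hcd : ContDiffOn ℝ (⊤ : ℕ∞) Lfun (Ioi (0 : ℝ)) :=
    fun x hx => (contDiffAt_Lfun (mem_Ioi.mp hx)).contDiffWithinAt
  refine ⟨hcd, Lfun_strictAntiOn, ⟨?_, Lfun_strictAntiOn.injOn, ?_⟩,
    fun x hx => Lfun_deriv_neg hx⟩
  · intro x hx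
    exact mem_Ioi.mpr (Lfun_gt (mem_Ioi.mp hx))
  · intro v hv
    rw [mem_Ioi] at hv
    have h1 : ∀ᶠ z in 𝓝[>] (0:ℝ), v < Lfun z :=
      Lfun_tendsto_zero.eventually_gt_atTop v
    obtain ⟨a, ha1, ha2⟩ := (h1.and self_mem_nhdsWithin).exists
    have ha : (0:ℝ) < a := ha2
    have h2 : ∀ᶠ z in atTop, Lfun z < v :=
      Lfun_tendsto_atTop.eventually_lt_const hv
    obtain ⟨b, hb1, hb2⟩ := (h2.and (eventually_ge_atTop a)).exists
    have hsub : Icc a b ⊆ Ioi (0:ℝ) := fun z hz => lt_of_lt_of_le ha hz.1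
    have hiv := intermediate_value_Icc' hb2 ((hcd.continuousOn).mono hsub)
    have hv' : v ∈ Icc (Lfun b) (Lfun a) := ⟨hb1.le, ha1.le⟩
    obtain ⟨z, hz, hzv⟩ := hiv hv'
    exact ⟨z, hsub hz, hzv⟩
end
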